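/- arXiv:1308.1762 — 9 statements merged into one kernel-verified Lean document; each statement's English description precedes it below -/
import Mathlib

section
/- Fix λ > 0 and a positive integer d. Let x̃ be the unique positive solution of d·x = 1 + λ/(1+x)^d and define Ξ(d,x) = (d·x/(1+x))·(f(x)/(1+f(x))) where f(x) = λ/(1+x)^d. Then for all x ≥ 0, Ξ(d,x) ≤ Ξ(d,x̃); that is, Ξ(d,·) is maximized at x̃. -/
lemma key_ineq (n : ℕ) (t u : ℝ) (ht : 0 < t) (hu : 0 ≤ u) :
    ((n:ℝ)+1) * t^n * u ≤ u^n * u + n * (t^n * t) := by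
  have ha : (-2:ℝ) ≤ u/t - 1 := by
    have : 0 ≤ u/t := div_nonneg hu ht.le
    linarith
  have hb := one_add_mul_le_pow ha (n+1)
  have h2 := mul_le_mul_of_nonneg_right hb (pow_pos ht (n+1)).le
  rw [show (1 + (u/t - 1)) = u/t by ring, div_pow,
    div_mul_cancel₀ _ (pow_ne_zero _ ht.ne')] at h2
  push_cast at h2
  rw [pow_succ, pow_succ] at h2
  have h3 : (1 + ((n:ℝ)+1) * (u/t - 1)) * (t^n * t)
      = ((n:ℝ)+1)*t^n*u - (n:ℝ)*(t^n*t) := by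
    field_simp
    ring
  linarith [h2, h3.ge, h3.le]

theorem Xi_maximized_at_fixed_point (lam : ℝ) (hlam : 0 < lam) (d : ℕ) (hd : 0 < d)
    (xt : ℝ) (hxt : 0 < xt) (heq : (d : ℝ) * xt = 1 + lam / (1 + xt) ^ d) :
    ∀ x : ℝ, 0 ≤ x →
      ((d : ℝ) * x / (1 + x)) * ((lam / (1 + x) ^ d) / (1 + lam / (1 + x) ^ d)) ≤
      ((d : ℝ) * xt / (1 + xt)) * ((lam / (1 + xt) ^ d) / (1 + lam / (1 + xt) ^ d)) := by
  intro x hx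
  have hu : (0:ℝ) < 1 + x := by linarith
  have ht : (0:ℝ) < 1 + xt := by linarith
  have hB : (0:ℝ) < (1+x)^d := pow_pos hu d
  have hA : (0:ℝ) < (1+xt)^d := pow_pos ht d
  have hd' : (0:ℝ) < (d:ℝ) := by exact_mod_cast hd
  have hlameq : lam = ((d:ℝ)*xt - 1)*(1+xt)^d := by
    have h := heq
    field_simp at h
    linarith [h]
  -- rewrite both sides as single fractions
  have L : ((d : ℝ) * x / (1 + x)) * ((lam / (1 + x) ^ d) / (1 + lam / (1 + x) ^ d))
      = ((d:ℝ)*x*lam) / ((1+x)*((1+x)^d + lam)) := by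
    have hnz : (1:ℝ) + lam / (1+x)^d ≠ 0 := by positivity
    field_simp
  have R : ((d : ℝ) * xt / (1 + xt)) * ((lam / (1 + xt) ^ d) / (1 + lam / (1 + xt) ^ d))
      = ((d:ℝ)*xt*lam) / ((1+xt)*((1+xt)^d + lam)) := by
    have hnz : (1:ℝ) + lam / (1+xt)^d ≠ 0 := by positivity
    field_simp
  rw [L, R, div_le_div_iff₀ (by positivity) (by positivity)]
  -- key tangent-line inequality
  have key2 := key_ineq d (1+xt) (1+x) ht hu.le
  have main2 : (d:ℝ)*x*((1+xt)*(1+xt)^d) ≤ (1+x)*((1+x)^d + lam) := by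
    rw [hlameq]
    nlinarith [key2]
  have hAl : (1+xt)^d + lam = (1+xt)^d*((d:ℝ)*xt) := by rw [hlameq]; ring
  rw [hAl]
  have c0 : (0:ℝ) ≤ (d:ℝ)*xt*lam := by positivity
  have step := mul_le_mul_of_nonneg_left main2 c0
  calc (d:ℝ)*x*lam*((1+xt)*((1+xt)^d*((d:ℝ)*xt)))
      = ((d:ℝ)*xt*lam) * ((d:ℝ)*x*((1+xt)*(1+xt)^d)) := by ring
    _ ≤ ((d:ℝ)*xt*lam) * ((1+x)*((1+x)^d + lam)) := step
    _ = (d:ℝ)*xt*lam*((1+x)*((1+x)^d + lam)) := by ring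
end

section
/- For every real D > 1, the function g(d) = (1 + D/(d(D-1) - 1))^{d+1}, defined for real d with d(D-1) > 1, is strictly decreasing in d, and its limit as d → ∞ is e^{D/(D-1)}. -/
/-!
Substituting `x = d (D - 1) - 1`, so that `d + 1 = (x + D) / (D - 1)`, the function becomes
`exp (φ_D x / (D - 1))` with `φ_a x = (x + a) log (1 + a / x)`. The derivative of `φ_a` is
`log (1 + a / x) - a / x < 0`, and `φ_a x = x log (1 + a / x) + a log (1 + a / x) → a + 0`.
-/

open Real Filter Set Topology

lemma hasDerivAt_add_mul_log_one_add_div {a x : ℝ} (ha : 0 ≤ a) (hx : 0 < x) :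
    HasDerivAt (fun x => (x + a) * log (1 + a / x)) (log (1 + a / x) - a / x) x := by
  have hxa : 1 + a / x ≠ 0 := by positivity
  have h := ((hasDerivAt_id x).add_const a).mul
    ((((hasDerivAt_const x a).div (hasDerivAt_id x) hx.ne').const_add 1).log hxa)
  refine h.congr_deriv ?_
  simp only [id, Pi.div_apply]
  field_simp
  ring

lemma strictAntiOn_add_mul_log_one_add_div {a : ℝ} (ha : 0 < a) :
    StrictAntiOn (fun x => (x + a) * log (1 + a / x)) (Ioi 0) := by
  have hderiv (x : ℝ) (hx : x ∈ Ioi 0) := hasDerivAt_add_mul_log_one_add_div ha.le hx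
  refine strictAntiOn_of_deriv_neg (convex_Ioi 0)
    (fun x hx => (hderiv x hx).continuousAt.continuousWithinAt) fun x hx => ?_
  rw [interior_Ioi] at hx
  have hax : 0 < a / x := div_pos ha hx
  rw [(hderiv x hx).deriv, sub_neg]
  simpa using log_lt_sub_one_of_pos (by positivity) (by linarith : 1 < 1 + a / x).ne'

lemma tendsto_add_mul_log_one_add_div_atTop (a : ℝ) :
    Tendsto (fun x => (x + a) * log (1 + a / x)) atTop (𝓝 a) := by
  have hlog : Tendsto (fun x => log (1 + a / x)) atTop (𝓝 0) := by
    have h := (((tendsto_const_nhds (x := a)).div_atTop tendsto_id).const_add 1).log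
      (by norm_num : (1 : ℝ) + 0 ≠ 0)
    simpa using h
  simpa [add_mul] using (tendsto_mul_log_one_add_div_atTop a).add (hlog.const_mul a)

lemma one_add_div_rpow_eq_exp {D d : ℝ} (hD : 1 < D) (hd : 0 < d * (D - 1) - 1) :
    (1 + D / (d * (D - 1) - 1)) ^ (d + 1) =
      exp ((d * (D - 1) - 1 + D) * log (1 + D / (d * (D - 1) - 1)) / (D - 1)) := by
  have hD1 : D - 1 ≠ 0 := by linarith
  rw [rpow_def_of_pos (by positivity)]
  congr 1
  field_simp
  ring

theorem g_strict_anti_and_limit (D : ℝ) (hD : 1 < D) :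
    StrictAntiOn (fun d : ℝ => (1 + D / (d * (D - 1) - 1)) ^ (d + 1))
      {d : ℝ | 1 < d * (D - 1)} ∧
    Filter.Tendsto (fun d : ℝ => (1 + D / (d * (D - 1) - 1)) ^ (d + 1))
      Filter.atTop (nhds (Real.exp (D / (D - 1)))) := by
  have hD1 : 0 < D - 1 := by linarith
  have hφ := strictAntiOn_add_mul_log_one_add_div (by linarith : 0 < D)
  constructor
  · intro d₁ hd₁ d₂ hd₂ hd
    have hx₁ : 0 < d₁ * (D - 1) - 1 := sub_pos.2 hd₁
    have hx₂ : 0 < d₂ * (D - 1) - 1 := sub_pos.2 hd₂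
    simp only [one_add_div_rpow_eq_exp hD hx₁, one_add_div_rpow_eq_exp hD hx₂, exp_lt_exp]
    exact div_lt_div_of_pos_right (hφ hx₁ hx₂ (by gcongr)) hD1
  · have hx : Tendsto (fun d : ℝ => d * (D - 1) - 1) atTop atTop :=
      tendsto_atTop_add_const_right _ _ (tendsto_id.atTop_mul_const hD1)
    have h := (((tendsto_add_mul_log_one_add_div_atTop D).comp hx).div_const (D - 1)).rexp
    refine h.congr' ?_
    filter_upwards [hx.eventually_gt_atTop 0] with d hd
    exact (one_add_div_rpow_eq_exp hD hd).symm
end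

section
/- Let D > 1 be real and let d ≥ 1 be an integer with d(D-1) > 1. Then (1 + D/(d(D-1) - 1))^{d+1} > (D/(D-1))^D. -/
/-!
Take logarithms. With `x = D / (D - 1)` and `y = 1 + D / (d (D - 1) - 1)`, the bounds
`1 - 1 / t < log t < t - 1` (for `t > 0`, `t ≠ 1`) give `D log x < D (x - 1) = x` and
`(d + 1) log y > (d + 1) (1 - 1 / y) = x`, so `x` separates the two logarithms.
-/

open Real

lemma Real.one_sub_inv_lt_log_of_pos {x : ℝ} (hx : 0 < x) (hx1 : x ≠ 1) : 1 - x⁻¹ < log x := by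
  have h := log_lt_sub_one_of_pos (inv_pos.2 hx) (inv_ne_one.2 hx1)
  rw [log_inv] at h
  linarith

lemma mul_log_div_sub_one_lt {D : ℝ} (hD : 1 < D) : D * log (D / (D - 1)) < D / (D - 1) := by
  have hD1 : 0 < D - 1 := sub_pos.2 hD
  have hx1 : D / (D - 1) ≠ 1 := by
    rw [Ne, div_eq_one_iff_eq hD1.ne']
    linarith
  calc D * log (D / (D - 1)) < D * (D / (D - 1) - 1) :=
        mul_lt_mul_of_pos_left (log_lt_sub_one_of_pos (div_pos (by linarith) hD1) hx1)
          (by linarith)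
    _ = D / (D - 1) := by field_simp; ring

lemma div_sub_one_lt_mul_log_one_add {D d : ℝ} (hD : 1 < D) (hdD : 1 < d * (D - 1)) :
    D / (D - 1) < (d + 1) * log (1 + D / (d * (D - 1) - 1)) := by
  have hD1 : 0 < D - 1 := sub_pos.2 hD
  have hden : 0 < d * (D - 1) - 1 := sub_pos.2 hdD
  have hd : 0 < d := pos_of_mul_pos_left (by linarith) hD1.le
  have hy : 1 < 1 + D / (d * (D - 1) - 1) := lt_add_of_pos_right 1 (div_pos (by linarith) hden)
  have hyD : (d + 1) * (1 - (1 + D / (d * (D - 1) - 1))⁻¹) = D / (D - 1) := by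
    field_simp
    ring
  calc D / (D - 1) = (d + 1) * (1 - (1 + D / (d * (D - 1) - 1))⁻¹) := hyD.symm
    _ < (d + 1) * log (1 + D / (d * (D - 1) - 1)) :=
        mul_lt_mul_of_pos_left (one_sub_inv_lt_log_of_pos (by linarith) hy.ne') (by linarith)

theorem key_inequality_general (D : ℝ) (hD : 1 < D) (d : ℕ)
    (hdD : 1 < (d : ℝ) * (D - 1)) :
    (D / (D - 1)) ^ D < (1 + D / ((d : ℝ) * (D - 1) - 1)) ^ (d + 1) := by
  have hx : 0 < D / (D - 1) := div_pos (by linarith) (by linarith)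
  have hy : 0 < 1 + D / ((d : ℝ) * (D - 1) - 1) :=
    add_pos one_pos (div_pos (by linarith) (by linarith))
  rw [← log_lt_log_iff (rpow_pos_of_pos hx D) (pow_pos hy _), log_rpow hx, log_pow]
  push_cast
  linarith [mul_log_div_sub_one_lt hD, div_sub_one_lt_mul_log_one_add hD hdD]

theorem key_inequality (D : ℝ) (hD : 1 < D) (d : ℕ) (hd : 1 ≤ d)
    (hdD : 1 < (d : ℝ) * (D - 1)) :
    (D / (D - 1)) ^ D < (1 + D / ((d : ℝ) * (D - 1) - 1)) ^ (d + 1) :=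
  key_inequality_general D hD d hdD
end

section
/- Fix real D > 1, set λ = D^D/(D-1)^{D+1}, and let x̃ be the unique positive solution of d·x = 1 + λ/(1+x)^d for a positive integer d. If d(D-1) > 1, then x̃ < D/(d(D-1) - 1). -/
theorem fixed_point_upper_bound (D : ℝ) (hD : 1 < D) (lam : ℝ)
    (hlam : lam = D ^ D / (D - 1) ^ (D + 1)) (d : ℕ) (hd : 0 < d)
    (hdD : 1 < (d : ℝ) * (D - 1))
    (xt : ℝ) (hxt : 0 < xt) (heq : (d : ℝ) * xt = 1 + lam / (1 + xt) ^ d) :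
    xt < D / ((d : ℝ) * (D - 1) - 1) := by
  have hD1 : (0:ℝ) < D - 1 := by linarith
  have hD0 : (0:ℝ) < D := by linarith
  set c : ℝ := (d : ℝ) * (D - 1) - 1 with hc
  have hc0 : 0 < c := by simp only [hc]; linarith
  set xs : ℝ := D / c with hxs
  have hxs0 : 0 < xs := div_pos hD0 hc0
  have hL : 1 + xs = ((d:ℝ) + 1) * (D - 1) / c := by
    rw [hxs]; field_simp [hc]; ring
  have hL0 : (0:ℝ) < 1 + xs := by linarith
  have hdxs : (d:ℝ) * xs - 1 = ((d:ℝ) + 1) / c := by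
    rw [hxs]; field_simp [hc]; ring
  have hlam0 : 0 < lam := by
    rw [hlam]; positivity
  -- key log inequalities
  have hlog1 : Real.log (D / (D - 1)) < 1 / (D - 1) := by
    have hq : (0:ℝ) < D / (D - 1) := div_pos hD0 hD1
    have hq1 : D / (D - 1) ≠ 1 := by
      intro h
      have : D = D - 1 := by field_simp at h; linarith
      linarith
    have h := Real.log_lt_sub_one_of_pos hq hq1
    have : D / (D - 1) - 1 = 1 / (D - 1) := by field_simp; ring
    linarith
  have hlog2 : D / (c + D) < Real.log (1 + xs) := by
    have hq : (0:ℝ) < 1 / (1 + xs) := by positivity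
    have hq1 : 1 / (1 + xs) ≠ 1 := by
      intro h
      rw [div_eq_one_iff_eq (by linarith)] at h
      linarith
    have h := Real.log_lt_sub_one_of_pos hq hq1
    rw [Real.log_div one_ne_zero (ne_of_gt hL0), Real.log_one] at h
    have hx : xs / (1 + xs) = D / (c + D) := by
      rw [hxs]
      have h1 : 1 + D / c = (c + D) / c := by field_simp
      rw [h1, div_div_div_eq, div_eq_div_iff (by positivity) (by positivity)]
      ring
    have h2 : 1 / (1 + xs) - 1 = -(xs / (1 + xs)) := by field_simp; ring
    rw [h2, hx] at h
    linarith
  have hmain : D * Real.log (D / (D - 1)) < ((d:ℝ) + 1) * Real.log (1 + xs) := by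
    have hd1 : ((d:ℝ) + 1) = (c + D) / (D - 1) := by
      rw [hc]; field_simp; ring
    have hcd : (0:ℝ) < c + D := by linarith
    have h1 : D * Real.log (D / (D - 1)) < D * (1 / (D - 1)) :=
      mul_lt_mul_of_pos_left hlog1 hD0
    have h2 : D < (c + D) * Real.log (1 + xs) := by
      have := mul_lt_mul_of_pos_left hlog2 hcd
      rwa [mul_div_cancel₀ _ (ne_of_gt hcd)] at this
    have h3 : D * (1 / (D - 1)) ≤ ((d:ℝ) + 1) * Real.log (1 + xs) := by
      rw [hd1, div_mul_eq_mul_div, le_div_iff₀ hD1]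
      have he : D * (1 / (D - 1)) * (D - 1) = D := by field_simp
      rw [he]
      linarith
    linarith
  have hrpow : (D / (D - 1)) ^ D < (1 + xs) ^ (d + 1) := by
    have h1 : (D / (D - 1)) ^ D = Real.exp (Real.log (D / (D - 1)) * D) :=
      Real.rpow_def_of_pos (div_pos hD0 hD1) D
    have h2 : (1 + xs : ℝ) ^ (d + 1) = Real.exp (Real.log (1 + xs) * ((d:ℝ) + 1)) := by
      rw [← Real.rpow_natCast (1 + xs) (d + 1), Real.rpow_def_of_pos hL0]
      push_cast; ring_nf
    rw [h1, h2, Real.exp_lt_exp]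
    nlinarith [hmain]
  have key : lam < ((d:ℝ) * xs - 1) * (1 + xs) ^ d := by
    have hlam' : lam = (D / (D - 1)) ^ D / (D - 1) := by
      rw [hlam, Real.div_rpow (le_of_lt hD0) (le_of_lt hD1),
        Real.rpow_add_one (ne_of_gt hD1)]
      field_simp
    have hexpr : ((d:ℝ) * xs - 1) * (1 + xs) ^ d = (1 + xs) ^ (d + 1) / (D - 1) := by
      rw [hdxs, pow_succ]
      have h5 : ((d:ℝ) + 1) / c = (1 + xs) / (D - 1) := by
        rw [hL]; field_simp
      rw [h5]; ring
    rw [hlam', hexpr]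
    gcongr
  -- conclude by contradiction using monotonicity
  by_contra hcon
  push_neg at hcon
  have hmono : (1 + xs) ^ d ≤ (1 + xt) ^ d := by
    gcongr
  have hdiv : lam / (1 + xt) ^ d ≤ lam / (1 + xs) ^ d :=
    div_le_div_of_nonneg_left (le_of_lt hlam0) (by positivity) hmono
  have h2 : lam / (1 + xs) ^ d < (d:ℝ) * xs - 1 := by
    rw [div_lt_iff₀ (by positivity : (0:ℝ) < (1 + xs) ^ d)]
    linarith [key]
  have h3 : (d:ℝ) * xs ≤ (d:ℝ) * xt :=
    mul_le_mul_of_nonneg_left hcon (Nat.cast_nonneg d)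
  linarith
end

section
/- Let Δ ≥ 1 be real and suppose 0 < λ < λ_c(Δ+1) = (Δ+1)^{Δ+1}/Δ^{Δ+2}. Then for every positive integer d, ν_λ(d)·Δ < 1, where ν_λ(d) = (d·x̃_λ(d) - 1)/(1 + x̃_λ(d)) and x̃_λ(d) is the unique positive solution of d·x = 1 + λ/(1+x)^d. -/
/-!
Write `y = 1 + x̃`. The fixed-point equation says `λ = (d x̃ - 1) y^d`, so if `ν Δ ≥ 1`, i.e.
`(d x̃ - 1) Δ ≥ y`, then `λ Δ ≥ y^(d+1)`, and the same inequality rearranges to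
`(d + 1) x̃ / y ≥ (Δ + 1) / Δ`. The two sides of `log (1 + u) ∈ (u / (1 + u), u)` now give
`y^(d+1) > exp ((d + 1) x̃ / y) ≥ exp ((Δ + 1) / Δ) > (1 + 1/Δ)^(Δ+1) = λ_c(Δ+1) Δ`,
contradicting `λ < λ_c(Δ+1)`.
-/

open Real

lemma one_add_inv_rpow_lt_exp {t a : ℝ} (ht : 0 < t) (ha : 0 < a) :
    (1 + t⁻¹) ^ a < exp (a / t) := by
  have hbase : 1 + t⁻¹ < exp t⁻¹ := by
    simpa [add_comm] using add_one_lt_exp (inv_ne_zero ht.ne')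
  calc (1 + t⁻¹) ^ a < exp t⁻¹ ^ a := rpow_lt_rpow (by positivity) hbase ha
    _ = exp (a / t) := by rw [← exp_mul, div_eq_inv_mul]

lemma exp_div_one_add_lt_one_add {x : ℝ} (hx : 0 < x) : exp (x / (1 + x)) < 1 + x := by
  have h : -(x / (1 + x)) + 1 < exp (-(x / (1 + x))) :=
    add_one_lt_exp (neg_ne_zero.mpr (by positivity))
  have hlhs : -(x / (1 + x)) + 1 = (1 + x)⁻¹ := by field_simp; ring
  rw [hlhs, exp_neg, inv_lt_inv₀ (by positivity) (exp_pos _)] at h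
  exact h

lemma exp_mul_div_one_add_lt_pow {x : ℝ} (hx : 0 < x) {n : ℕ} (hn : n ≠ 0) :
    exp (n * (x / (1 + x))) < (1 + x) ^ n := by
  rw [exp_nat_mul]
  exact pow_lt_pow_left₀ (exp_div_one_add_lt_one_add hx) (exp_pos _).le hn

lemma add_one_rpow_div_rpow_add_two_mul_self {Δ : ℝ} (hΔ : 0 < Δ) :
    (Δ + 1) ^ (Δ + 1) / Δ ^ (Δ + 2) * Δ = (1 + Δ⁻¹) ^ (Δ + 1) := by
  rw [show 1 + Δ⁻¹ = (Δ + 1) / Δ by field_simp, div_rpow (by positivity) hΔ.le,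
    show Δ + 2 = (Δ + 1) + 1 by ring, rpow_add hΔ, rpow_one]
  field_simp

theorem nu_times_Delta_lt_one_general (Δ : ℝ) (hΔ : 1 ≤ Δ) (lam : ℝ)
    (hlt : lam < (Δ + 1) ^ (Δ + 1) / Δ ^ (Δ + 2)) (d : ℕ)
    (xt : ℝ) (hxt : 0 < xt) (heq : (d : ℝ) * xt = 1 + lam / (1 + xt) ^ d) :
    (((d : ℝ) * xt - 1) / (1 + xt)) * Δ < 1 := by
  have hΔ0 : 0 < Δ := by linarith
  have hy : 0 < 1 + xt := by linarith
  by_contra! hcon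
  rw [div_mul_eq_mul_div, le_div_iff₀ hy, one_mul] at hcon
  have hlam : lam = ((d : ℝ) * xt - 1) * (1 + xt) ^ d := by
    field_simp at heq
    linarith
  have hexponent : (Δ + 1) / Δ ≤ ((d + 1 : ℕ) : ℝ) * (xt / (1 + xt)) := by
    rw [div_le_iff₀ hΔ0, mul_div_assoc', div_mul_eq_mul_div, le_div_iff₀ hy]
    push_cast
    nlinarith
  have hpow : (1 + xt) ^ (d + 1) ≤ lam * Δ := by
    rw [hlam, pow_succ]
    nlinarith [pow_pos hy d]
  have hcrit : lam * Δ < (1 + Δ⁻¹) ^ (Δ + 1) := by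
    rw [← add_one_rpow_div_rpow_add_two_mul_self hΔ0]
    exact mul_lt_mul_of_pos_right hlt hΔ0
  have : (1 + Δ⁻¹) ^ (Δ + 1) < lam * Δ :=
    calc (1 + Δ⁻¹) ^ (Δ + 1) < exp ((Δ + 1) / Δ) := one_add_inv_rpow_lt_exp hΔ0 (by linarith)
      _ ≤ exp (((d + 1 : ℕ) : ℝ) * (xt / (1 + xt))) := exp_le_exp.mpr hexponent
      _ < (1 + xt) ^ (d + 1) := exp_mul_div_one_add_lt_pow hxt d.succ_ne_zero
      _ ≤ lam * Δ := hpow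
  linarith

theorem nu_times_Delta_lt_one (Δ : ℝ) (hΔ : 1 ≤ Δ) (lam : ℝ) (hlam : 0 < lam)
    (hlt : lam < (Δ + 1) ^ (Δ + 1) / Δ ^ (Δ + 2)) (d : ℕ) (hd : 0 < d)
    (xt : ℝ) (hxt : 0 < xt) (heq : (d : ℝ) * xt = 1 + lam / (1 + xt) ^ d) :
    (((d : ℝ) * xt - 1) / (1 + xt)) * Δ < 1 :=
  nu_times_Delta_lt_one_general Δ hΔ lam hlt d xt hxt heq
end

section
/- Let φ: (0,∞) → ℝ be continuously differentiable and strictly increasing with derivative Φ bounded away from 0 on every interval (0,M], and let f(R₁,...,R_d) = λ·∏ᵢ 1/(1+Rᵢ) for λ > 0. Define f^φ(x₁,...,x_d) = φ(f(φ⁻¹(x₁),...,φ⁻¹(x_d))). Then for any x, y in (φ((0,∞)))^d there exists z ∈ (0,∞)^d such that |f^φ(x) - f^φ(y)| ≤ f(z)·Φ(f(z))·∑ᵢ |yᵢ - xᵢ|/((1+zᵢ)·Φ(zᵢ)). -/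
/-!
Join `y` to `x` by the path `t ↦ ψ (y + t (x - y))`, which stays in `(0, ∞)^d` because
`φ '' (0, ∞)` is an interval, and apply the scalar mean value theorem to `φ ∘ f` along it.
The derivative of `ψ` is `1 / Φ ∘ ψ`, and `|∂f/∂Rᵢ| = f / (1 + Rᵢ)`.
-/

open Set Finset

theorem HasDerivAt.of_strictMonoOn_leftInvOn {φ ψ : ℝ → ℝ} {s : Set ℝ} {u φ' : ℝ}
    (hs : IsOpen s) (hs' : s.OrdConnected) (hmono : StrictMonoOn φ s) (hcont : ContinuousOn φ s)
    (hinv : LeftInvOn ψ φ s) (hu : u ∈ s) (hder : HasDerivAt φ φ' u) (hφ' : φ' ≠ 0) :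
    HasDerivAt ψ φ'⁻¹ (φ u) := by
  have himage_nhds : φ '' s ∈ nhds (φ u) := by
    obtain ⟨a, hau, ha⟩ := Filter.Eventually.exists_lt (hs.mem_nhds hu)
    obtain ⟨b, hub, hb⟩ := Filter.Eventually.exists_gt (hs.mem_nhds hu)
    have himage : (φ '' s).OrdConnected :=
      isPreconnected_iff_ordConnected.1 (hs'.isPreconnected.image φ hcont)
    exact Filter.mem_of_superset (Ioo_mem_nhds (hmono ha hu hau) (hmono hu hb hub))
      (Ioo_subset_Icc_self.trans (himage.out (mem_image_of_mem φ ha) (mem_image_of_mem φ hb)))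
  have hψmono : MonotoneOn ψ (φ '' s) := by
    rintro _ ⟨v, hv, rfl⟩ _ ⟨w, hw, rfl⟩ hvw
    rw [hinv hv, hinv hw]
    exact (hmono.le_iff_le hv hw).1 hvw
  have hψcont : ContinuousAt ψ (φ u) :=
    continuousAt_of_monotoneOn_of_image_mem_nhds hψmono himage_nhds
      (by rw [hinv.image_image, hinv hu]; exact hs.mem_nhds hu)
  exact HasDerivAt.of_local_left_inverse hψcont (by rwa [hinv hu]) hφ'
    (Filter.eventually_of_mem himage_nhds hinv.rightInvOn_image)

theorem mem_and_hasDerivAt_of_leftInvOn {φ Φ ψ : ℝ → ℝ} {s : Set ℝ} (hs : IsOpen s)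
    (hs' : s.OrdConnected) (hmono : StrictMonoOn φ s) (hderiv : ∀ u ∈ s, HasDerivAt φ (Φ u) u)
    (hΦ : ∀ u ∈ s, Φ u ≠ 0) (hinv : LeftInvOn ψ φ s) {q : ℝ} (hq : q ∈ φ '' s) :
    ψ q ∈ s ∧ HasDerivAt ψ (Φ (ψ q))⁻¹ q := by
  obtain ⟨u, hu, rfl⟩ := hq
  rw [hinv hu]
  exact ⟨hu, (hderiv u hu).of_strictMonoOn_leftInvOn hs hs' hmono
    (fun v hv => (hderiv v hv).continuousAt.continuousWithinAt) hinv hu (hΦ u hu)⟩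

section HardCore

variable {ι : Type*} [Fintype ι]

noncomputable def hardCoreRecursion (lam : ℝ) (R : ι → ℝ) : ℝ := lam * ∏ i, 1 / (1 + R i)

theorem hardCoreRecursion_pos {lam : ℝ} {R : ι → ℝ} (hlam : 0 < lam) (hR : ∀ i, 0 < 1 + R i) :
    0 < hardCoreRecursion lam R :=
  mul_pos hlam (prod_pos fun i _ => one_div_pos.2 (hR i))

theorem HasDerivAt.hardCoreRecursion (lam : ℝ) {c : ι → ℝ → ℝ} {c' : ι → ℝ} {t : ℝ}
    (hc : ∀ i, HasDerivAt (c i) (c' i) t) (hne : ∀ i, 1 + c i t ≠ 0) :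
    HasDerivAt (fun s => hardCoreRecursion lam fun i => c i s)
      (-(hardCoreRecursion lam fun i => c i t) * ∑ i, c' i / (1 + c i t)) t := by
  classical
  have hfactor : ∀ i, HasDerivAt (fun s => 1 / (1 + c i s)) (-c' i / (1 + c i t) ^ 2) t := by
    intro i
    simpa only [one_div] using ((hc i).const_add 1).fun_inv (hne i)
  refine ((HasDerivAt.fun_finsetProd (u := univ) fun i _ => hfactor i).const_mul
    lam).congr_deriv ?_
  rw [_root_.hardCoreRecursion, mul_sum, mul_sum]
  refine sum_congr rfl fun i _ => ?_
  rw [← prod_erase_mul _ _ (mem_univ i), smul_eq_mul]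
  field_simp [hne i]

end HardCore

theorem abs_mul_neg_mul_sum_le {ι : Type*} [Fintype ι] {a b : ℝ} (ha : 0 ≤ a) (hb : 0 ≤ b)
    {p r x y : ι → ℝ} (hp : ∀ i, 0 ≤ p i) (hr : ∀ i, 0 ≤ r i) :
    |b * (-a * ∑ i, (p i)⁻¹ * (x i - y i) / r i)| ≤ a * b * ∑ i, |y i - x i| / (r i * p i) := by
  rw [abs_mul, abs_mul, abs_neg, abs_of_nonneg ha, abs_of_nonneg hb, mul_left_comm, ← mul_assoc]
  refine mul_le_mul_of_nonneg_left ((abs_sum_le_sum_abs _ _).trans_eq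
    (sum_congr rfl fun i _ => ?_)) (mul_nonneg ha hb)
  rw [abs_div, abs_mul, abs_inv, abs_of_nonneg (hp i), abs_of_nonneg (hr i), abs_sub_comm,
    inv_mul_eq_div, div_div, mul_comm]

theorem mean_value_lemma_general (d : ℕ) (lam : ℝ) (hlam : 0 < lam)
    (φ Φ ψ : ℝ → ℝ)
    (hmono : StrictMonoOn φ (Set.Ioi 0))
    (hderiv : ∀ x ∈ Set.Ioi (0 : ℝ), HasDerivAt φ (Φ x) x)
    (hΦpos : ∀ M > (0 : ℝ), ∃ c > (0 : ℝ), ∀ x ∈ Set.Ioc (0 : ℝ) M, c ≤ Φ x)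
    (hψ : ∀ x ∈ Set.Ioi (0 : ℝ), ψ (φ x) = x)
    (f : (Fin d → ℝ) → ℝ) (hf : f = fun R => lam * ∏ i, 1 / (1 + R i))
    (fφ : (Fin d → ℝ) → ℝ) (hfφ : fφ = fun x => φ (f (fun i => ψ (x i))))
    (x y : Fin d → ℝ)
    (hx : ∀ i, x i ∈ φ '' Set.Ioi 0) (hy : ∀ i, y i ∈ φ '' Set.Ioi 0) :
    ∃ z : Fin d → ℝ, (∀ i, 0 < z i) ∧
      |fφ x - fφ y| ≤ f z * Φ (f z) * ∑ i, |y i - x i| / ((1 + z i) * Φ (z i)) := by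
  obtain rfl : f = hardCoreRecursion lam := hf
  subst hfφ
  have hΦ : ∀ u > 0, 0 < Φ u := fun u hu =>
    let ⟨_, hc, hle⟩ := hΦpos u hu; hc.trans_le (hle u ⟨hu, le_rfl⟩)
  have hconvex : Convex ℝ (φ '' Ioi 0) := Real.convex_iff_isPreconnected.2 <|
    isPreconnected_Ioi.image φ fun u hu => (hderiv u hu).continuousAt.continuousWithinAt
  set c : Fin d → ℝ → ℝ := fun i t => ψ (y i + t * (x i - y i))
  have hc : ∀ t ∈ Icc (0 : ℝ) 1, ∀ i, 0 < c i t ∧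
      HasDerivAt (c i) ((Φ (c i t))⁻¹ * (x i - y i)) t := by
    intro t ht i
    obtain ⟨hpos, hder⟩ := mem_and_hasDerivAt_of_leftInvOn isOpen_Ioi ordConnected_Ioi hmono
      hderiv (fun u hu => (hΦ u hu).ne') hψ <| by
      simpa only [smul_eq_mul] using hconvex.add_smul_sub_mem (hy i) (hx i) ht
    exact ⟨hpos, hder.comp t ((((hasDerivAt_id t).mul_const _).const_add _).congr_deriv
      (one_mul _))⟩
  have hF : ∀ t ∈ Icc (0 : ℝ) 1, 0 < hardCoreRecursion lam fun i => c i t := fun t ht =>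
    hardCoreRecursion_pos hlam fun i => by linarith [(hc t ht i).1]
  have hg : ∀ t ∈ Icc (0 : ℝ) 1, HasDerivAt (fun t => φ (hardCoreRecursion lam fun i => c i t))
      (Φ (hardCoreRecursion lam fun i => c i t) * (-(hardCoreRecursion lam fun i => c i t) *
        ∑ i, (Φ (c i t))⁻¹ * (x i - y i) / (1 + c i t))) t := fun t ht =>
    (hderiv _ (hF t ht)).comp t <| HasDerivAt.hardCoreRecursion lam (fun i => (hc t ht i).2)
      fun i => by linarith [(hc t ht i).1]
  obtain ⟨t, ht, hslope⟩ := exists_hasDerivAt_eq_slope _ _ one_pos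
    (fun t ht => (hg t ht).continuousAt.continuousWithinAt)
    (fun t ht => hg t (Ioo_subset_Icc_self ht))
  have hz := hc t (Ioo_subset_Icc_self ht)
  have hFt := hF t (Ioo_subset_Icc_self ht)
  refine ⟨fun i => c i t, fun i => (hz i).1, ?_⟩
  have hc₁ : (fun i => c i 1) = fun i => ψ (x i) := by simp [c]
  have hc₀ : (fun i => c i 0) = fun i => ψ (y i) := by simp [c]
  rw [hc₁, hc₀, sub_zero, div_one] at hslope
  rw [← hslope]
  exact abs_mul_neg_mul_sum_le hFt.le (hΦ _ hFt).le (fun i => (hΦ _ (hz i).1).le)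
    fun i => by linarith [(hz i).1]

theorem mean_value_lemma (d : ℕ) (hd : 0 < d) (lam : ℝ) (hlam : 0 < lam)
    (φ Φ ψ : ℝ → ℝ)
    (hmono : StrictMonoOn φ (Set.Ioi 0))
    (hderiv : ∀ x ∈ Set.Ioi (0 : ℝ), HasDerivAt φ (Φ x) x)
    (hΦcont : ContinuousOn Φ (Set.Ioi 0))
    (hΦpos : ∀ M > (0 : ℝ), ∃ c > (0 : ℝ), ∀ x ∈ Set.Ioc (0 : ℝ) M, c ≤ Φ x)
    (hψ : ∀ x ∈ Set.Ioi (0 : ℝ), ψ (φ x) = x)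
    (f : (Fin d → ℝ) → ℝ) (hf : f = fun R => lam * ∏ i, 1 / (1 + R i))
    (fφ : (Fin d → ℝ) → ℝ) (hfφ : fφ = fun x => φ (f (fun i => ψ (x i))))
    (x y : Fin d → ℝ)
    (hx : ∀ i, x i ∈ φ '' Set.Ioi 0) (hy : ∀ i, y i ∈ φ '' Set.Ioi 0) :
    ∃ z : Fin d → ℝ, (∀ i, 0 < z i) ∧
      |fφ x - fφ y| ≤ f z * Φ (f z) * ∑ i, |y i - x i| / ((1 + z i) * Φ (z i)) :=
  mean_value_lemma_general d lam hlam φ Φ ψ hmono hderiv hΦpos hψ f hf fφ hfφ x y hx hy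
end

section
/- Fix λ > 0, a positive integer d, let f_d(x) = λ/(1+x)^d, and define Ξ(d,x) = (d·x/(1+x))·(f_d(x)/(1+f_d(x))) and ξ(d) = sup_{x ≥ 0} Ξ(d,x). Then for any vectors x, y ∈ (arcsinh∘√)((0,∞))^d (i.e., in the image of the message φ(t) = arcsinh(√t)), writing f_d^φ for the conjugated recurrence, one has |f_d^φ(x) - f_d^φ(y)|² ≤ ξ(d)·∑ᵢ (xᵢ - yᵢ)². -/
/-!
Along the segment `c(t) = y + t (x - y)` the conjugated recurrence is `arsinh v` with
`v = √λ ∏ sech cᵢ`, whose derivative is `-(v / √(1 + v²)) ∑ tanh cᵢ (xᵢ - yᵢ)`. By Cauchy–Schwarz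
its square is at most `u / (1 + u) · ∑ zᵢ / (1 + zᵢ) · ∑ (xᵢ - yᵢ)²`, where `zᵢ = sinh² cᵢ` and
`u = v² = λ ∏ 1 / (1 + zᵢ)`. For `w = (∏ (1 + zᵢ))^(1/d) - 1` we have `u = f_d(w)`, and AM–GM
for the numbers `1 / (1 + zᵢ)` gives `∑ zᵢ / (1 + zᵢ) ≤ d w / (1 + w)`; hence the factor in front
of `∑ (xᵢ - yᵢ)²` is at most `Ξ(d, w) ≤ ξ(d)`, and the mean value theorem concludes.
-/

open Real Finset

/-- The function `Ξ(d, ·)`. -/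
noncomputable def contractionRate (lam : ℝ) (d : ℕ) (x : ℝ) : ℝ :=
  (d * x / (1 + x)) * (lam / (1 + x) ^ d / (1 + lam / (1 + x) ^ d))

lemma contractionRate_nonneg {lam : ℝ} (hlam : 0 ≤ lam) (d : ℕ) {x : ℝ} (hx : 0 ≤ x) :
    0 ≤ contractionRate lam d x := by
  unfold contractionRate; positivity

lemma contractionRate_le {lam : ℝ} (hlam : 0 ≤ lam) (d : ℕ) {x : ℝ} (hx : 0 ≤ x) :
    contractionRate lam d x ≤ d := by
  calc contractionRate lam d x ≤ d * 1 := by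
        unfold contractionRate
        gcongr ?_ * ?_
        · rw [div_le_iff₀ (by positivity)]; nlinarith [(Nat.cast_nonneg d : (0 : ℝ) ≤ d)]
        · rw [div_le_one (by positivity)]; linarith
    _ = d := mul_one _

lemma bddAbove_contractionRate_image {lam : ℝ} (hlam : 0 ≤ lam) (d : ℕ) :
    BddAbove (contractionRate lam d '' Set.Ici 0) :=
  ⟨d, Set.forall_mem_image.2 fun _ hx => contractionRate_le hlam d hx⟩

section
variable {ι : Type*} [Fintype ι]

/-- The point `w ≥ 0` with `(1 + w) ^ d = ∏ (1 + zᵢ)`. -/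
noncomputable def geomShift (z : ι → ℝ) : ℝ :=
  (∏ i, (1 + z i)) ^ ((Fintype.card ι : ℝ)⁻¹) - 1

variable {z : ι → ℝ}

lemma one_le_prod_one_add (hz : ∀ i, 0 ≤ z i) : 1 ≤ ∏ i, (1 + z i) :=
  one_le_prod fun i _ => le_add_of_nonneg_right (hz i)

lemma geomShift_nonneg (hz : ∀ i, 0 ≤ z i) : 0 ≤ geomShift z :=
  sub_nonneg.2 (one_le_rpow (one_le_prod_one_add hz) (by positivity))

lemma one_add_geomShift_pow (hz : ∀ i, 0 ≤ z i) :
    (1 + geomShift z) ^ Fintype.card ι = ∏ i, (1 + z i) := by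
  rcases isEmpty_or_nonempty ι with hι | hι
  · simp
  · rw [geomShift, add_sub_cancel,
      rpow_inv_natCast_pow (zero_le_one.trans (one_le_prod_one_add hz)) Fintype.card_ne_zero]

/-- AM–GM for the numbers `1 / (1 + zᵢ)`. -/
lemma sum_div_one_add_le_geomShift (hz : ∀ i, 0 ≤ z i) :
    ∑ i, z i / (1 + z i) ≤ Fintype.card ι * geomShift z / (1 + geomShift z) := by
  rcases isEmpty_or_nonempty ι with hι | hι
  · simp
  have hpos : ∀ i, 0 < 1 + z i := fun i => by linarith [hz i]
  have hn : (0 : ℝ) < Fintype.card ι := by exact_mod_cast Fintype.card_pos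
  have amgm := geom_mean_le_arith_mean univ (fun _ => 1) (fun i => (1 + z i)⁻¹)
    (fun _ _ => zero_le_one) (by simpa using hn) (fun i _ => (inv_pos.2 (hpos i)).le)
  simp only [rpow_one, one_mul, sum_const, card_univ, nsmul_eq_mul, mul_one, prod_inv_distrib,
    inv_rpow (prod_nonneg fun i _ => (hpos i).le)] at amgm
  have hsplit : ∑ i, z i / (1 + z i) = Fintype.card ι - ∑ i, (1 + z i)⁻¹ := by
    rw [eq_sub_iff_add_eq, ← sum_add_distrib]
    have h1 : ∀ i, z i / (1 + z i) + (1 + z i)⁻¹ = 1 := fun i => by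
      field_simp [(hpos i).ne']; ring
    simp [h1]
  have hw : 1 + geomShift z = (∏ i, (1 + z i)) ^ ((Fintype.card ι : ℝ)⁻¹) := by
    rw [geomShift]; ring
  have hr : 0 < 1 + geomShift z := by linarith [geomShift_nonneg hz]
  rw [← hw, le_div_iff₀ hn] at amgm
  have hrhs : Fintype.card ι * geomShift z / (1 + geomShift z)
      = Fintype.card ι - (1 + geomShift z)⁻¹ * Fintype.card ι := by
    field_simp; ring
  rw [hsplit, hrhs]
  linarith

lemma mul_sum_div_one_add_le_contractionRate {lam : ℝ} (hlam : 0 ≤ lam) (hz : ∀ i, 0 ≤ z i) :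
    (lam * ∏ i, 1 / (1 + z i)) / (1 + lam * ∏ i, 1 / (1 + z i)) * ∑ i, z i / (1 + z i)
      ≤ contractionRate lam (Fintype.card ι) (geomShift z) := by
  have hu : lam * ∏ i, 1 / (1 + z i) = lam / (1 + geomShift z) ^ Fintype.card ι := by
    rw [one_add_geomShift_pow hz, prod_div_distrib, prod_const_one, mul_one_div]
  rw [hu, contractionRate, mul_comm (_ * _ / _)]
  have hw := geomShift_nonneg hz
  gcongr
  exact sum_div_one_add_le_geomShift hz

lemma mul_sum_div_one_add_le_sSup {lam : ℝ} (hlam : 0 ≤ lam) (hz : ∀ i, 0 ≤ z i) :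
    (lam * ∏ i, 1 / (1 + z i)) / (1 + lam * ∏ i, 1 / (1 + z i)) * ∑ i, z i / (1 + z i)
      ≤ sSup (contractionRate lam (Fintype.card ι) '' Set.Ici 0) :=
  (mul_sum_div_one_add_le_contractionRate hlam hz).trans <|
    le_csSup (bddAbove_contractionRate_image hlam _) ⟨_, geomShift_nonneg hz, rfl⟩

/-- `√λ ∏ sech xᵢ`, written through `exp` and `log` to make it easy to differentiate. -/
noncomputable def sechProd (lam : ℝ) (x : ι → ℝ) : ℝ :=
  √lam * exp (-∑ i, log (cosh (x i)))

lemma sqrt_mul_prod_one_div_one_add_sinh_sq (lam : ℝ) (x : ι → ℝ) :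
    √(lam * ∏ i, 1 / (1 + sinh (x i) ^ 2)) = sechProd lam x := by
  have hprod : ∏ i, 1 / (1 + sinh (x i) ^ 2) = exp (-∑ i, log (cosh (x i))) ^ 2 := by
    simp only [exp_neg, exp_sum, exp_log (cosh_pos _), ← prod_inv_distrib, ← prod_pow, ← cosh_sq',
      one_div, inv_pow]
  rw [hprod, sqrt_mul' _ (sq_nonneg _), sqrt_sq (exp_pos _).le, sechProd]

lemma hasDerivAt_sechProd_line (lam : ℝ) (x Δ : ι → ℝ) (t : ℝ) :
    HasDerivAt (fun t => sechProd lam (x + t • Δ))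
      (-(sechProd lam (x + t • Δ) * ∑ i, tanh ((x + t • Δ) i) * Δ i)) t := by
  have hlog : ∀ i ∈ univ, HasDerivAt (fun t => log (cosh (x i + t * Δ i)))
      (tanh (x i + t * Δ i) * Δ i) t := fun i _ => by
    have hline : HasDerivAt (fun t => x i + t * Δ i) (Δ i) t := by
      simpa using (hasDerivAt_mul_const (Δ i)).const_add (x i)
    convert hline.cosh.log (cosh_pos _).ne' using 1
    rw [tanh_eq_sinh_div_cosh]; ring
  refine (((HasDerivAt.fun_sum hlog).fun_neg.exp).const_mul √lam).congr_deriv ?_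
  simp only [sechProd, Pi.add_apply, Pi.smul_apply, smul_eq_mul]
  ring

lemma sq_deriv_arsinh_sechProd_le {lam : ℝ} (hlam : 0 ≤ lam) (c Δ : ι → ℝ) :
    ((√(1 + sechProd lam c ^ 2))⁻¹ * (sechProd lam c * ∑ i, tanh (c i) * Δ i)) ^ 2
      ≤ sSup (contractionRate lam (Fintype.card ι) '' Set.Ici 0) * ∑ i, Δ i ^ 2 := by
  set z : ι → ℝ := fun i => sinh (c i) ^ 2
  set u := lam * ∏ i, 1 / (1 + z i)
  have hv : sechProd lam c ^ 2 = u := by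
    rw [← sqrt_mul_prod_one_div_one_add_sinh_sq, sq_sqrt (by positivity)]
  have htanh : ∀ i, tanh (c i) ^ 2 = z i / (1 + z i) := fun i => by
    rw [tanh_eq_sinh_div_cosh, div_pow, cosh_sq']
  calc ((√(1 + sechProd lam c ^ 2))⁻¹ * (sechProd lam c * ∑ i, tanh (c i) * Δ i)) ^ 2
      = u / (1 + u) * (∑ i, tanh (c i) * Δ i) ^ 2 := by
        rw [mul_pow, mul_pow, inv_pow, sq_sqrt (by positivity), hv]; ring
    _ ≤ u / (1 + u) * ((∑ i, tanh (c i) ^ 2) * ∑ i, Δ i ^ 2) := by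
        gcongr; exact sum_mul_sq_le_sq_mul_sq _ _ _
    _ = (u / (1 + u) * ∑ i, z i / (1 + z i)) * ∑ i, Δ i ^ 2 := by
        simp only [htanh]; ring
    _ ≤ _ := by
        gcongr
        exact mul_sum_div_one_add_le_sSup hlam fun i => sq_nonneg _
end

theorem contraction_lemma_general (lam : ℝ) (hlam : 0 < lam) (d : ℕ)
    (φ ψ : ℝ → ℝ)
    (hφ : φ = fun t => Real.arsinh (Real.sqrt t))
    (hψ : ψ = fun t => (Real.sinh t) ^ 2)
    (fd : ℝ → ℝ) (hfd : fd = fun x => lam / (1 + x) ^ d)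
    (Ξ : ℝ → ℝ) (hΞ : Ξ = fun x => ((d : ℝ) * x / (1 + x)) * (fd x / (1 + fd x)))
    (ξ : ℝ) (hξ : ξ = sSup (Ξ '' Set.Ici 0))
    (fφ : (Fin d → ℝ) → ℝ)
    (hfφ : fφ = fun x => φ (lam * ∏ i, 1 / (1 + ψ (x i))))
    (x y : Fin d → ℝ) :
    |fφ x - fφ y| ^ 2 ≤ ξ * ∑ i, (x i - y i) ^ 2 := by
  have hfφ_eq : ∀ z, fφ z = arsinh (sechProd lam z) := fun z => by
    subst hfφ hφ hψ
    exact congrArg arsinh (sqrt_mul_prod_one_div_one_add_sinh_sq lam z)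
  have hξ_eq : ξ = sSup (contractionRate lam (Fintype.card (Fin d)) '' Set.Ici 0) := by
    subst hξ hΞ hfd
    rw [Fintype.card_fin]
    rfl
  have hξ_nonneg : 0 ≤ ξ := hξ_eq ▸ Real.sSup_nonneg
    (Set.forall_mem_image.2 fun _ hw => contractionRate_nonneg hlam.le _ hw)
  have hmvt := norm_image_sub_le_of_norm_deriv_le_segment' (a := 0) (b := 1)
    (fun t _ => (hasDerivAt_sechProd_line lam y (x - y) t).arsinh.hasDerivWithinAt)
    (fun t _ => by
      rw [Real.norm_eq_abs, smul_eq_mul, mul_neg, abs_neg]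
      exact Real.abs_le_sqrt (hξ_eq ▸ sq_deriv_arsinh_sechProd_le hlam.le _ (x - y)))
    1 (by simp)
  simp only [one_smul, zero_smul, add_sub_cancel, add_zero, sub_zero, mul_one,
    Pi.sub_apply, Real.norm_eq_abs] at hmvt
  rw [hfφ_eq, hfφ_eq, ← sq_sqrt (mul_nonneg hξ_nonneg (sum_nonneg fun i _ => sq_nonneg _))]
  exact pow_le_pow_left₀ (abs_nonneg _) hmvt 2

theorem contraction_lemma (lam : ℝ) (hlam : 0 < lam) (d : ℕ) (hd : 0 < d)
    (φ ψ : ℝ → ℝ)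
    (hφ : φ = fun t => Real.arsinh (Real.sqrt t))
    (hψ : ψ = fun t => (Real.sinh t) ^ 2)
    (fd : ℝ → ℝ) (hfd : fd = fun x => lam / (1 + x) ^ d)
    (Ξ : ℝ → ℝ) (hΞ : Ξ = fun x => ((d : ℝ) * x / (1 + x)) * (fd x / (1 + fd x)))
    (ξ : ℝ) (hξ : ξ = sSup (Ξ '' Set.Ici 0))
    (fφ : (Fin d → ℝ) → ℝ)
    (hfφ : fφ = fun x => φ (lam * ∏ i, 1 / (1 + ψ (x i))))
    (x y : Fin d → ℝ)
    (hx : ∀ i, x i ∈ φ '' Set.Ioi 0) (hy : ∀ i, y i ∈ φ '' Set.Ioi 0) :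
    |fφ x - fφ y| ^ 2 ≤ ξ * ∑ i, (x i - y i) ^ 2 :=
  contraction_lemma_general lam hlam d φ ψ hφ hψ fd hfd Ξ hΞ ξ hξ fφ hfφ x y
end

section
/- Fix λ > 0 and define ν(d) = ν_λ(d) = (d·x̃(d) - 1)/(1 + x̃(d)), where x̃(d) is the unique positive solution of d·x = 1 + λ/(1+x)^d, with d ranging over positive reals. Then ν is differentiable in d with ν'(d) = (ν(d)/(d·x̃(d)))·(x̃(d) - log(1 + x̃(d))) > 0; in particular ν is strictly increasing in d. -/
/-!
The fixed point `x̃(d)` is the positive root of `R(d, x) = d x - 1 - λ (1 + x)^(-d)`, which is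
strictly increasing in `x`. Local uniqueness of the root identifies `x̃` with the implicit function
of `R` at `(d, x̃ d)`, so `x̃' = -∂_d R / ∂_x R`. Substituting `λ (1 + x̃)^(-d) = d x̃ - 1` into the
quotient rule for `ν` gives the formula; it is positive because `d x̃ > 1` and `log (1 + t) < t`.
-/

open Filter Topology Set Real

section ImplicitFunction

variable {𝕜 : Type*} [NontriviallyNormedField 𝕜]
  {E₁ : Type*} [NormedAddCommGroup E₁] [NormedSpace 𝕜 E₁] [CompleteSpace E₁]
  {E₂ : Type*} [NormedAddCommGroup E₂] [NormedSpace 𝕜 E₂] [CompleteSpace E₂]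
  {F : Type*} [NormedAddCommGroup F] [NormedSpace 𝕜 F] [CompleteSpace F]

theorem HasStrictFDerivAt.hasStrictFDerivAt_of_eventually_unique_root
    {f : E₁ × E₂ → F} {f' : E₁ × E₂ →L[𝕜] F} {φ : E₁ → E₂} {a : E₁} {U : Set E₂}
    (hf : HasStrictFDerivAt f f' (a, φ a)) (hf₂ : (f' ∘L .inr 𝕜 E₁ E₂).IsInvertible)
    (hU : U ∈ 𝓝 (φ a)) (huniq : ∀ᶠ t in 𝓝 a, ∀ y ∈ U, f (t, y) = f (a, φ a) → y = φ t) :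
    HasStrictFDerivAt φ (-(f' ∘L .inr 𝕜 E₁ E₂).inverse ∘L (f' ∘L .inl 𝕜 E₁ E₂)) a := by
  refine (hf.hasStrictFDerivAt_implicitFunctionOfProdDomain hf₂).congr_of_eventuallyEq ?_
  filter_upwards [hf.eventually_apply_implicitFunctionOfProdDomain hf₂,
    hf.tendsto_implicitFunctionOfProdDomain hf₂ hU, huniq] with t hroot hmem htuniq
  exact htuniq _ hmem hroot

theorem HasStrictFDerivAt.hasStrictDerivAt_of_eventually_unique_root
    [CompleteSpace 𝕜] {f : 𝕜 × 𝕜 → 𝕜} {f₁ f₂ : 𝕜} {φ : 𝕜 → 𝕜} {a : 𝕜} {U : Set 𝕜}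
    (hf : HasStrictFDerivAt f
      (f₁ • ContinuousLinearMap.fst 𝕜 𝕜 𝕜 + f₂ • ContinuousLinearMap.snd 𝕜 𝕜 𝕜) (a, φ a))
    (hf₂ : f₂ ≠ 0) (hU : U ∈ 𝓝 (φ a))
    (huniq : ∀ᶠ t in 𝓝 a, ∀ y ∈ U, f (t, y) = f (a, φ a) → y = φ t) :
    HasStrictDerivAt φ (-f₁ / f₂) a := by
  set f' := f₁ • ContinuousLinearMap.fst 𝕜 𝕜 𝕜 + f₂ • ContinuousLinearMap.snd 𝕜 𝕜 𝕜
  have hinr : f' ∘L .inr 𝕜 𝕜 𝕜 = f₂ • .id 𝕜 𝕜 := by ext; simp [f']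
  have hleft : (f₂ • ContinuousLinearMap.id 𝕜 𝕜) ∘L (f₂⁻¹ • .id 𝕜 𝕜) = .id 𝕜 𝕜 := by
    ext; simp [hf₂]
  have hright : (f₂⁻¹ • ContinuousLinearMap.id 𝕜 𝕜) ∘L (f₂ • .id 𝕜 𝕜) = .id 𝕜 𝕜 := by
    ext; simp [hf₂]
  have hφ := hf.hasStrictFDerivAt_of_eventually_unique_root
    (hinr ▸ .of_inverse hleft hright) hU huniq
  refine hφ.hasStrictDerivAt.congr_deriv ?_
  rw [hinr, ContinuousLinearMap.inverse_eq hleft hright]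
  simp only [f', ContinuousLinearMap.add_comp, ContinuousLinearMap.smul_comp,
    ContinuousLinearMap.fst_comp_inl, ContinuousLinearMap.snd_comp_inl, smul_zero, add_zero,
    ContinuousLinearMap.comp_smulₛₗ, RingHom.id_apply, ContinuousLinearMap.comp_id,
    neg_apply, smul_apply, ContinuousLinearMap.id_apply, smul_eq_mul, mul_one]
  ring

end ImplicitFunction

noncomputable def fixedPointResidual (lam : ℝ) (p : ℝ × ℝ) : ℝ :=
  p.1 * p.2 - 1 - lam * (1 + p.2) ^ (-p.1)

section FixedPoint

variable {lam d x : ℝ}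

theorem fixedPointResidual_eq_zero_iff (hx : 0 < 1 + x) :
    fixedPointResidual lam (d, x) = 0 ↔ d * x = 1 + lam / (1 + x) ^ d := by
  rw [fixedPointResidual, rpow_neg hx.le, ← div_eq_mul_inv, sub_sub, sub_eq_zero]

theorem strictMonoOn_fixedPointResidual (hlam : 0 ≤ lam) (hd : 0 < d) :
    StrictMonoOn (fun x => fixedPointResidual lam (d, x)) (Ioi (-1)) := by
  intro y hy z hz hyz
  have hpow : (1 + z) ^ (-d) < (1 + y) ^ (-d) :=
    rpow_lt_rpow_of_neg (by linarith [mem_Ioi.1 hy]) (by linarith) (by linarith)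
  simp only [fixedPointResidual]
  nlinarith [mul_le_mul_of_nonneg_left hpow.le hlam]

theorem hasStrictFDerivAt_fixedPointResidual (hx : 0 < 1 + x) :
    HasStrictFDerivAt (fixedPointResidual lam)
      ((x + lam * (1 + x) ^ (-d) * log (1 + x)) • ContinuousLinearMap.fst ℝ ℝ ℝ +
        (d + lam * d * (1 + x) ^ (-d - 1)) • ContinuousLinearMap.snd ℝ ℝ ℝ) (d, x) := by
  have hbase : HasStrictFDerivAt (fun p : ℝ × ℝ => 1 + p.2) (ContinuousLinearMap.snd ℝ ℝ ℝ)
      (d, x) :=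
    hasStrictFDerivAt_snd.const_add 1
  have hpow := hbase.rpow (hasStrictFDerivAt_fst (𝕜 := ℝ) (p := (d, x))).neg hx
  have := ((hasStrictFDerivAt_fst.mul hasStrictFDerivAt_snd).sub_const 1).sub (hpow.const_mul lam)
  refine this.congr_fderiv ?_
  ext <;> simp <;> ring

theorem hasStrictDerivAt_of_fixedPointResidual_eq_zero {φ : ℝ → ℝ} (hlam : 0 ≤ lam)
    (hφ : ∀ t > 0, 0 < φ t ∧ fixedPointResidual lam (t, φ t) = 0) (hd : 0 < d) :
    HasStrictDerivAt φ
      (-(φ d + (d * φ d - 1) * log (1 + φ d)) / (d * φ d * (1 + d) / (1 + φ d))) d := by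
  obtain ⟨hx, hroot⟩ := hφ d hd
  have h1x : 0 < 1 + φ d := by linarith
  have hpow : lam * (1 + φ d) ^ (-d) = d * φ d - 1 := by
    simp only [fixedPointResidual] at hroot; linarith
  have hf₂ : d + lam * d * (1 + φ d) ^ (-d - 1) = d * φ d * (1 + d) / (1 + φ d) := by
    have : lam * d * (1 + φ d) ^ (-d - 1) = d * (lam * (1 + φ d) ^ (-d)) / (1 + φ d) := by
      rw [rpow_sub_one h1x.ne']; ring
    rw [this, hpow]
    field_simp
    ring
  have huniq : ∀ᶠ t in 𝓝 d, ∀ y ∈ Ioi 0,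
      fixedPointResidual lam (t, y) = fixedPointResidual lam (d, φ d) → y = φ t := by
    filter_upwards [Ioi_mem_nhds hd] with t ht y hy hty
    obtain ⟨hxt, hroot_t⟩ := hφ t ht
    refine (strictMonoOn_fixedPointResidual hlam ht).injOn
      (mem_Ioi.2 (by linarith [mem_Ioi.1 hy])) (mem_Ioi.2 (by linarith)) ?_
    simp only [hty, hroot, hroot_t]
  have hφ' := HasStrictFDerivAt.hasStrictDerivAt_of_eventually_unique_root
    (hasStrictFDerivAt_fixedPointResidual h1x) (by rw [hf₂]; positivity) (Ioi_mem_nhds hx) huniq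
  rwa [hpow, hf₂] at hφ'

theorem hasDerivAt_div_of_fixedPointResidual_eq_zero {φ : ℝ → ℝ} (hlam : 0 ≤ lam)
    (hφ : ∀ t > 0, 0 < φ t ∧ fixedPointResidual lam (t, φ t) = 0) (hd : 0 < d) :
    HasDerivAt (fun t => (t * φ t - 1) / (1 + φ t))
      ((d * φ d - 1) / (1 + φ d) / (d * φ d) * (φ d - log (1 + φ d))) d := by
  have hx := (hφ d hd).1
  have hφ' := (hasStrictDerivAt_of_fixedPointResidual_eq_zero hlam hφ hd).hasDerivAt
  refine (((hasDerivAt_id d).mul hφ').sub_const 1).div (hφ'.const_add 1) (by positivity)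
    |>.congr_deriv ?_
  simp only [Pi.mul_apply, id]
  field_simp
  ring

end FixedPoint

theorem nu_deriv_pos (lam : ℝ) (hlam : 0 < lam) (xt : ℝ → ℝ)
    (hxt : ∀ d > (0 : ℝ), 0 < xt d ∧ d * xt d = 1 + lam / (1 + xt d) ^ d)
    (ν : ℝ → ℝ) (hν : ν = fun d => (d * xt d - 1) / (1 + xt d)) :
    (∀ d > (0 : ℝ),
      HasDerivAt ν ((ν d / (d * xt d)) * (xt d - Real.log (1 + xt d))) d ∧
      0 < (ν d / (d * xt d)) * (xt d - Real.log (1 + xt d))) ∧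
    StrictMonoOn ν (Set.Ioi 0) := by
  have hroot : ∀ t > 0, 0 < xt t ∧ fixedPointResidual lam (t, xt t) = 0 := fun t ht =>
    ⟨(hxt t ht).1, (fixedPointResidual_eq_zero_iff (by linarith [(hxt t ht).1])).2 (hxt t ht).2⟩
  have hderiv : ∀ d > (0 : ℝ),
      HasDerivAt ν ((ν d / (d * xt d)) * (xt d - Real.log (1 + xt d))) d := by
    intro d hd
    simpa only [hν] using hasDerivAt_div_of_fixedPointResidual_eq_zero hlam.le hroot hd
  have hpos : ∀ d > (0 : ℝ), 0 < (ν d / (d * xt d)) * (xt d - Real.log (1 + xt d)) := by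
    intro d hd
    obtain ⟨hx, heq⟩ := hxt d hd
    have hν_pos : 0 < ν d := by
      have : 0 < lam / (1 + xt d) ^ d := by positivity
      rw [hν]
      exact div_pos (by linarith) (by linarith)
    have hlog := log_lt_sub_one_of_pos (by linarith : 0 < 1 + xt d) (by linarith)
    have : 0 < xt d - log (1 + xt d) := by linarith
    positivity
  refine ⟨fun d hd => ⟨hderiv d hd, hpos d hd⟩, strictMonoOn_of_deriv_pos (convex_Ioi 0)
    (fun d hd => (hderiv d hd).continuousAt.continuousWithinAt) fun d hd => ?_⟩
  rw [interior_Ioi] at hd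
  rw [(hderiv d hd).deriv]
  exact hpos d hd
end

section
/- Fix λ > 0 and define ν(d) as in the hard core analysis (ν(d) = (d·x̃(d)-1)/(1+x̃(d)) where x̃(d) solves d·x = 1 + λ/(1+x)^d, for real d ≥ 1). Then the function H(x) = log(e^x · ν(e^x)) is concave on [0, ∞). -/
/-!
Write `d = exp t` and `x = x̃(d)`. The fixed-point equation gives `ν(d) = λ (1 + x)^{-(d+1)}`, so
`H t = log λ + t - (exp t + 1) log (1 + x̃(exp t))`. Differentiating `x̃` implicitly yields
`H' t = 2 - log (1 + x) / x`. Now `x̃` is decreasing in `d`, and `u ↦ log (1 + u) / u` is decreasing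
on `u > 0` (it is the secant slope of the concave `log` at `1`), so `H'` is decreasing.
-/
open Real Set Filter Topology

theorem hasDerivWithinAt_of_implicit {f : ℝ × ℝ → ℝ} {g : ℝ → ℝ} {s U : Set ℝ} {a f₁ f₂ : ℝ}
    (hf : ContDiffAt ℝ 1 f (a, g a))
    (h₁ : HasDerivAt (fun d => f (d, g a)) f₁ a)
    (h₂ : HasDerivAt (fun x => f (a, x)) f₂ (g a)) (hf₂ : f₂ ≠ 0)
    (hU : U ∈ 𝓝 (g a))
    (hg : ∀ᶠ d in 𝓝[s] a, f (d, g d) = f (a, g a) ∧ g d ∈ U ∧ InjOn (fun x => f (d, x)) U) :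
    HasDerivWithinAt g (-f₁ / f₂) s a := by
  have hf' := hf.hasStrictFDerivAt one_ne_zero
  set L := fderiv ℝ f (a, g a)
  have hL₁ : L (1, 0) = f₁ := by
    simpa using (hf'.hasFDerivAt.comp a
      ((hasFDerivAt_id a).prodMk (hasFDerivAt_const _ a))).hasDerivAt.unique h₁
  have hL₂ : L (0, 1) = f₂ :=
    (hf'.hasFDerivAt.comp (g a)
      ((hasFDerivAt_const a _).prodMk (hasFDerivAt_id _))).hasDerivAt.unique h₂
  have hLinr : L ∘L .inr ℝ ℝ ℝ =
      (ContinuousLinearEquiv.unitsEquivAut ℝ (Units.mk0 f₂ hf₂) : ℝ →L[ℝ] ℝ) := by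
    ext
    simp [← hL₂]
  have hinv : (L ∘L .inr ℝ ℝ ℝ).IsInvertible := hLinr ▸ ContinuousLinearMap.isInvertible_equiv
  set ψ := hf'.implicitFunctionOfProdDomain hinv
  have hψ : HasDerivAt ψ (-f₁ / f₂) a := by
    refine (hf'.hasStrictFDerivAt_implicitFunctionOfProdDomain
      hinv).hasStrictDerivAt.hasDerivAt.congr_deriv ?_
    simp [hLinr, hL₁, div_eq_mul_inv]
  -- near `a`, both `ψ d` and `g d` are roots of `f (d, ·)` in `U`, where roots are unique
  have hψg : ψ =ᶠ[𝓝[s] a] g := by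
    have hψroot := hf'.eventually_apply_implicitFunctionOfProdDomain hinv
    have hψU := (hf'.tendsto_implicitFunctionOfProdDomain hinv).eventually hU
    filter_upwards [nhdsWithin_le_nhds hψroot, nhdsWithin_le_nhds hψU, hg]
      with d hψroot hψU ⟨hgroot, hgU, hinj⟩
    exact hinj hψU hgU (hψroot.trans hgroot.symm)
  have hψa : ψ a = g a :=
    (hf'.eventually_apply_eq_iff_implicitFunctionOfProdDomain hinv).self_of_nhds.mp rfl
  exact hψ.hasDerivWithinAt.congr_of_eventuallyEq hψg.symm hψa.symm

noncomputable def fixedPointGap (lam d x : ℝ) : ℝ := d * x - 1 - lam / (1 + x) ^ d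

section
variable {lam : ℝ}

lemma contDiffAt_fixedPointGap {d x : ℝ} (hx : 0 < 1 + x) :
    ContDiffAt ℝ 1 (fun p : ℝ × ℝ => fixedPointGap lam p.1 p.2) (d, x) := by
  unfold fixedPointGap
  have : ContDiffAt ℝ 1 (fun p : ℝ × ℝ => (1 + p.2) ^ p.1) (d, x) :=
    (contDiffAt_const.add contDiffAt_snd).rpow contDiffAt_fst hx.ne'
  exact ((contDiffAt_fst.mul contDiffAt_snd).sub contDiffAt_const).sub
    (contDiffAt_const.div this (Real.rpow_pos_of_pos hx d).ne')

lemma hasDerivAt_fixedPointGap_fst {d x : ℝ} (hx : 0 < 1 + x) :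
    HasDerivAt (fun d => fixedPointGap lam d x) (x + lam / (1 + x) ^ d * log (1 + x)) d := by
  have hpos := Real.rpow_pos_of_pos hx d
  have h : HasDerivAt (fun d => d * x - 1 - lam / (1 + x) ^ d) _ d :=
    ((hasDerivAt_mul_const x).sub_const 1).sub
      ((hasDerivAt_const d lam).div (Real.hasStrictDerivAt_const_rpow hx d).hasDerivAt hpos.ne')
  refine h.congr_deriv ?_
  field_simp
  ring

lemma hasDerivAt_fixedPointGap_snd {d x : ℝ} (hx : 0 < 1 + x) :
    HasDerivAt (fixedPointGap lam d) (d + d * (lam / (1 + x) ^ d) / (1 + x)) x := by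
  have hpos := Real.rpow_pos_of_pos hx d
  have h : HasDerivAt (fun x => d * x - 1 - lam / (1 + x) ^ d) _ x :=
    (((hasDerivAt_id x).const_mul d).sub_const 1).sub ((hasDerivAt_const x lam).div
      (((hasDerivAt_id x).const_add 1).rpow_const (p := d) (Or.inl hx.ne')) hpos.ne')
  refine h.congr_deriv ?_
  simp only [id, mul_one, one_mul, zero_mul, zero_sub]
  rw [Real.rpow_sub_one hx.ne']
  field_simp
  ring

lemma fixedPointGap_strictMonoOn (hlam : 0 ≤ lam) {d : ℝ} (hd : 0 < d) :
    StrictMonoOn (fixedPointGap lam d) (Ioi 0) := by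
  intro a ha b hb hab
  have ha' : 0 < 1 + a := by linarith [mem_Ioi.mp ha]
  have h₁ : (1 + a) ^ d < (1 + b) ^ d := by gcongr
  have h₂ : lam / (1 + b) ^ d ≤ lam / (1 + a) ^ d := by gcongr
  unfold fixedPointGap
  nlinarith

lemma fixedPointGap_lt_of_lt (hlam : 0 ≤ lam) {c d x : ℝ} (hx : 0 < x) (hcd : c < d) :
    fixedPointGap lam c x < fixedPointGap lam d x := by
  have : lam / (1 + x) ^ d ≤ lam / (1 + x) ^ c := by
    gcongr
    linarith
  unfold fixedPointGap
  nlinarith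

end

theorem AntitoneOn.concaveOn_of_hasDerivWithinAt {D : Set ℝ} {f f' : ℝ → ℝ}
    (hf' : AntitoneOn f' (interior D)) (hD : Convex ℝ D)
    (hf : ∀ x ∈ D, HasDerivWithinAt f (f' x) D x) :
    ConcaveOn ℝ D f := by
  have hint : ∀ x ∈ interior D, HasDerivAt f (f' x) x := fun x hx =>
    (hf x (interior_subset hx)).hasDerivAt (mem_interior_iff_mem_nhds.mp hx)
  refine hf'.congr (fun x hx => (hint x hx).deriv.symm) |>.concaveOn_of_deriv hD
    (fun x hx => (hf x hx).continuousWithinAt)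
    (fun x hx => (hint x hx).differentiableAt.differentiableWithinAt)

theorem antitoneOn_log_one_add_div : AntitoneOn (fun u : ℝ => log (1 + u) / u) (Ioi 0) := by
  have hmem : ∀ u ∈ Ioi (0 : ℝ), 1 + u ∈ Ioi 0 \ {1} := fun u hu =>
    ⟨mem_Ioi.mpr (by linarith [mem_Ioi.mp hu]), by simpa using (mem_Ioi.mp hu).ne'⟩
  intro a ha b hb hab
  simpa [slope_def_field] using strictConcaveOn_log_Ioi.concaveOn.slope_anti (mem_Ioi.mpr one_pos)
    (hmem a ha) (hmem b hb) (by linarith)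

def IsXTilde (lam : ℝ) (xt : ℝ → ℝ) : Prop :=
  ∀ d ≥ (1 : ℝ), 0 < xt d ∧ d * xt d = 1 + lam / (1 + xt d) ^ d

namespace IsXTilde
variable {lam : ℝ} {xt : ℝ → ℝ}

lemma fixedPointGap_eq_zero (h : IsXTilde lam xt) {d : ℝ} (hd : 1 ≤ d) :
    fixedPointGap lam d (xt d) = 0 := by
  unfold fixedPointGap
  linarith [(h d hd).2]

lemma strictAntiOn (h : IsXTilde lam xt) (hlam : 0 ≤ lam) : StrictAntiOn xt (Ici 1) := by
  intro c hc d hd hcd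
  have hgap : fixedPointGap lam d (xt d) < fixedPointGap lam d (xt c) := by
    rw [h.fixedPointGap_eq_zero hd, ← h.fixedPointGap_eq_zero hc]
    exact fixedPointGap_lt_of_lt hlam (h c hc).1 hcd
  exact ((fixedPointGap_strictMonoOn hlam (by linarith [mem_Ici.mp hd])).lt_iff_lt
    (h d hd).1 (h c hc).1).mp hgap

lemma hasDerivWithinAt (h : IsXTilde lam xt) (hlam : 0 ≤ lam) {d : ℝ} (hd : 1 ≤ d) :
    HasDerivWithinAt xt (-(xt d + (d * xt d - 1) * log (1 + xt d)) /
      (d + d * (d * xt d - 1) / (1 + xt d))) (Ici 1) d := by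
  obtain ⟨hx, hroot⟩ := h d hd
  have hx1 : 0 < 1 + xt d := by linarith
  have hK : lam / (1 + xt d) ^ d = d * xt d - 1 := by linarith
  have hK0 : 0 ≤ d * xt d - 1 := hK ▸ by positivity
  have h₁ := hasDerivAt_fixedPointGap_fst (lam := lam) (d := d) hx1
  have h₂ := hasDerivAt_fixedPointGap_snd (lam := lam) (d := d) hx1
  rw [hK] at h₁ h₂
  refine hasDerivWithinAt_of_implicit (f := fun p => fixedPointGap lam p.1 p.2) (U := Ioi 0)
    (contDiffAt_fixedPointGap hx1) h₁ h₂ ?_ (Ioi_mem_nhds hx) ?_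
  · exact (add_pos_of_pos_of_nonneg (by linarith) (by positivity)).ne'
  · filter_upwards [self_mem_nhdsWithin] with c hc
    exact ⟨(h.fixedPointGap_eq_zero hc).trans (h.fixedPointGap_eq_zero hd).symm, (h c hc).1,
      (fixedPointGap_strictMonoOn hlam (by linarith [mem_Ici.mp hc])).injOn⟩

lemma log_mul_nu (h : IsXTilde lam xt) (hlam : 0 < lam) {d : ℝ} (hd : 1 ≤ d) :
    log (d * ((d * xt d - 1) / (1 + xt d))) = log lam + log d - (d + 1) * log (1 + xt d) := by
  obtain ⟨hx, hroot⟩ := h d hd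
  have hx1 : 0 < 1 + xt d := by linarith
  have hK : d * xt d - 1 = lam / (1 + xt d) ^ d := by linarith
  rw [hK, log_mul (by positivity) (by positivity), log_div (by positivity) hx1.ne',
    log_div hlam.ne' (by positivity), log_rpow hx1]
  ring

lemma hasDerivWithinAt_log_mul_nu (h : IsXTilde lam xt) (hlam : 0 ≤ lam) {d : ℝ} (hd : 1 ≤ d) :
    HasDerivWithinAt (fun d => log lam + log d - (d + 1) * log (1 + xt d))
      ((2 - log (1 + xt d) / xt d) / d) (Ici 1) d := by
  obtain ⟨hx, hroot⟩ := h d hd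
  have hx1 : 0 < 1 + xt d := by linarith
  have hlog := ((h.hasDerivWithinAt hlam hd).const_add 1).log hx1.ne'
  have := (((hasDerivAt_log (by linarith : d ≠ 0)).hasDerivWithinAt.const_add (log lam)).sub
    (((hasDerivWithinAt_id d _).add_const 1).mul hlog))
  refine this.congr_deriv ?_
  have hden : d + d * (d * xt d - 1) / (1 + xt d) = d * xt d * (d + 1) / (1 + xt d) := by
    field_simp; ring
  rw [hden, id]
  field_simp
  ring

end IsXTilde

theorem H_concave (lam : ℝ) (hlam : 0 < lam) (xt : ℝ → ℝ)
    (hxt : ∀ d ≥ (1 : ℝ), 0 < xt d ∧ d * xt d = 1 + lam / (1 + xt d) ^ d)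
    (ν : ℝ → ℝ) (hν : ν = fun d => (d * xt d - 1) / (1 + xt d))
    (H : ℝ → ℝ) (hH : H = fun x => Real.log (Real.exp x * ν (Real.exp x))) :
    ConcaveOn ℝ (Set.Ici 0) H := by
  subst hν hH
  have hsol : IsXTilde lam xt := hxt
  have hexp : MapsTo exp (Ici 0) (Ici 1) := fun t ht => one_le_exp ht
  have hderiv : ∀ t ∈ Ici (0 : ℝ), HasDerivWithinAt
      (fun t => log lam + log (exp t) - (exp t + 1) * log (1 + xt (exp t)))
      (2 - log (1 + xt (exp t)) / xt (exp t)) (Ici 0) t := fun t ht =>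
    ((hsol.hasDerivWithinAt_log_mul_nu hlam.le (hexp ht)).comp t
      (hasDerivAt_exp t).hasDerivWithinAt hexp).congr_deriv (by field_simp)
  have hanti : AntitoneOn (fun t => 2 - log (1 + xt (exp t)) / xt (exp t))
      (interior (Ici 0)) := by
    rw [interior_Ici]
    intro a ha b hb hab
    have hxt_le : xt (exp b) ≤ xt (exp a) :=
      (hsol.strictAntiOn hlam.le).antitoneOn (hexp (mem_Ici_of_Ioi ha)) (hexp (mem_Ici_of_Ioi hb))
        (exp_le_exp.mpr hab)
    have := antitoneOn_log_one_add_div (hsol _ (hexp (mem_Ici_of_Ioi hb))).1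
      (hsol _ (hexp (mem_Ici_of_Ioi ha))).1 hxt_le
    simp only at this ⊢
    linarith
  refine (hanti.concaveOn_of_hasDerivWithinAt (convex_Ici 0) hderiv).congr fun t ht => ?_
  simp only [hsol.log_mul_nu hlam (hexp ht)]
end
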